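/- For p ∈ ℝ³ with p ≠ 0, let U(p) = a₊(p)·I₄ + a₋(p)·β·(α·p)/|p| with a±(p) = √((1 ± 1/λ(p))/2) and λ(p) = √(|p|² + 1). Then U(p)·(α·p + β)·U(p)⁻¹ = λ(p)·β, i.e. U(p) diagonalizes the free Dirac symbol. -/

import Mathlib

open Matrix Complex

/-! With `M = β (α·p)`, the relations `β² = 1`, `(α·p)² = |p|²` and `(α·p) β = -β (α·p)` give
`M² = -|p|²`, so `U = a₊ + (a₋/|p|) M` calculates like the complex number `a₊ + i a₋`: it is
inverted by `a₊ - (a₋/|p|) M` because `a₊² + a₋² = 1`, and `U (α·p + β) = λ β U` reduces to the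
scalar identities `a₊ |p| = a₋ (λ + 1)` and `|p|² = λ² - 1`. -/

noncomputable section

/-- The Pauli–Dirac matrix β = diag(I₂, −I₂). -/
def diracBeta : Matrix (Fin 4) (Fin 4) ℂ :=
  !![1, 0, 0, 0; 0, 1, 0, 0; 0, 0, -1, 0; 0, 0, 0, -1]

/-- The Pauli–Dirac matrices αₖ = [[0, σₖ], [σₖ, 0]] for k = 1, 2, 3. -/
def diracAlpha : Fin 3 → Matrix (Fin 4) (Fin 4) ℂ
  | 0 => !![0, 0, 0, 1; 0, 0, 1, 0; 0, 1, 0, 0; 1, 0, 0, 0]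
  | 1 => !![0, 0, 0, -I; 0, 0, I, 0; 0, -I, 0, 0; I, 0, 0, 0]
  | 2 => !![0, 0, 1, 0; 0, 0, 0, -1; 1, 0, 0, 0; 0, -1, 0, 0]

/-- α·p = α₁p₁ + α₂p₂ + α₃p₃. -/
def alphaDot (p : EuclideanSpace ℝ (Fin 3)) : Matrix (Fin 4) (Fin 4) ℂ :=
  ∑ k : Fin 3, (p k : ℂ) • diracAlpha k

/-- λ(p) = √(|p|² + 1). -/
def lam (p : EuclideanSpace ℝ (Fin 3)) : ℝ :=
  Real.sqrt (‖p‖ ^ 2 + 1)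

/-- a₊(p) = √((1 + 1/λ(p))/2). -/
def aplus (p : EuclideanSpace ℝ (Fin 3)) : ℝ :=
  Real.sqrt ((1 + 1 / lam p) / 2)

/-- a₋(p) = √((1 − 1/λ(p))/2). -/
def aminus (p : EuclideanSpace ℝ (Fin 3)) : ℝ :=
  Real.sqrt ((1 - 1 / lam p) / 2)

/-- U(p) = a₊(p)·I₄ + a₋(p)·β·(α·p)/|p|. -/
def Umat (p : EuclideanSpace ℝ (Fin 3)) : Matrix (Fin 4) (Fin 4) ℂ :=
  (aplus p : ℂ) • (1 : Matrix (Fin 4) (Fin 4) ℂ) +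
    ((aminus p / ‖p‖ : ℝ) : ℂ) • (diracBeta * alphaDot p)

/-- The symbol D̂₀(p) = α·p + β of the free Dirac operator. -/
def diracSym (p : EuclideanSpace ℝ (Fin 3)) : Matrix (Fin 4) (Fin 4) ℂ :=
  alphaDot p + diracBeta

section FoldyWouthuysen

variable {R S : Type*} [CommRing R] [Ring S] [Algebra R S]

theorem mul_mul_self_eq_neg_of_anticommute {A B : S} {n : R} (hB : B * B = 1)
    (hA : A * A = n • 1) (hAB : A * B = -(B * A)) : B * A * (B * A) = -(n • 1) := by
  rw [mul_assoc, ← mul_assoc A, hAB, neg_mul, mul_neg, ← mul_assoc, ← mul_assoc, hB, one_mul, hA]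

theorem smul_one_add_smul_mul_smul_one_sub_smul {M : S} {n : R} (hM : M * M = -(n • 1))
    (a c : R) : (a • 1 + c • M) * (a • 1 - c • M) = (a ^ 2 + c ^ 2 * n) • (1 : S) := by
  simp only [mul_sub, add_mul, smul_mul_smul_comm, one_mul, mul_one, hM]
  module

theorem smul_one_add_smul_mul_intertwines {A B : S} {n a c l : R} (hB : B * B = 1)
    (hA : A * A = n • 1) (hAB : A * B = -(B * A)) (ha : a = c * (l + 1)) (hn : n = l ^ 2 - 1) :
    (a • 1 + c • (B * A)) * (A + B) = (l • B) * (a • 1 + c • (B * A)) := by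
  have hBAB : B * A * B = -A := by rw [mul_assoc, hAB, mul_neg, ← mul_assoc, hB, one_mul]
  have hBBA : B * (B * A) = A := by rw [← mul_assoc, hB, one_mul]
  simp only [mul_add, add_mul, smul_mul_assoc, mul_smul_comm, one_mul, mul_one, hBAB, hBBA]
  rw [mul_assoc, hA, mul_smul_comm, mul_one]
  subst ha hn
  module

end FoldyWouthuysen

section Scalars

variable (p : EuclideanSpace ℝ (Fin 3))

theorem lam_sq : lam p ^ 2 = ‖p‖ ^ 2 + 1 :=
  Real.sq_sqrt (by positivity)

theorem one_le_lam : 1 ≤ lam p :=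
  Real.one_le_sqrt.mpr (by nlinarith [sq_nonneg ‖p‖])

theorem aplus_sq : aplus p ^ 2 = (1 + 1 / lam p) / 2 :=
  Real.sq_sqrt (by have := one_le_lam p; positivity)

theorem aminus_sq : aminus p ^ 2 = (1 - 1 / lam p) / 2 :=
  Real.sq_sqrt <| by
    have : 1 / lam p ≤ 1 := (div_le_one (by linarith [one_le_lam p])).mpr (one_le_lam p)
    linarith

theorem aplus_sq_add_aminus_sq : aplus p ^ 2 + aminus p ^ 2 = 1 := by
  rw [aplus_sq, aminus_sq]; ring

theorem aminus_mul_lam_add_one : aminus p * (lam p + 1) = aplus p * ‖p‖ := by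
  have hminus : 0 ≤ aminus p := Real.sqrt_nonneg _
  have hplus : 0 ≤ aplus p := Real.sqrt_nonneg _
  have hlam : 0 < lam p := by linarith [one_le_lam p]
  refine (sq_eq_sq₀ (by positivity) (by positivity)).mp ?_
  rw [mul_pow, mul_pow, aplus_sq, aminus_sq, (by linarith [lam_sq p] : ‖p‖ ^ 2 = lam p ^ 2 - 1)]
  field_simp
  ring

end Scalars

theorem alphaDot_eq_of (p : EuclideanSpace ℝ (Fin 3)) :
    alphaDot p = !![0, 0, (p 2 : ℂ), p 0 - p 1 * I;
      0, 0, p 0 + p 1 * I, -(p 2 : ℂ);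
      (p 2 : ℂ), p 0 - p 1 * I, 0, 0;
      p 0 + p 1 * I, -(p 2 : ℂ), 0, 0] := by
  ext i j
  fin_cases i <;> fin_cases j <;>
    simp [alphaDot, diracAlpha, Fin.sum_univ_three] <;> ring

theorem diracBeta_mul_self : diracBeta * diracBeta = 1 := by
  ext i j
  fin_cases i <;> fin_cases j <;> simp [diracBeta, Matrix.mul_apply, Fin.sum_univ_four]

theorem alphaDot_mul_diracBeta (p : EuclideanSpace ℝ (Fin 3)) :
    alphaDot p * diracBeta = -(diracBeta * alphaDot p) := by
  rw [alphaDot_eq_of]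
  ext i j
  fin_cases i <;> fin_cases j <;> simp [diracBeta, Matrix.mul_apply, Fin.sum_univ_four]

theorem alphaDot_mul_self (p : EuclideanSpace ℝ (Fin 3)) :
    alphaDot p * alphaDot p = ‖p‖ ^ 2 • (1 : Matrix (Fin 4) (Fin 4) ℂ) := by
  have hp : ((‖p‖ ^ 2 : ℝ) : ℂ) = p 0 ^ 2 + p 1 ^ 2 + p 2 ^ 2 := by
    simp [EuclideanSpace.real_norm_sq_eq, Fin.sum_univ_three]
  rw [alphaDot_eq_of, ← Complex.coe_smul, hp]
  ext i j
  fin_cases i <;> fin_cases j <;> simp [Matrix.mul_apply, Fin.sum_univ_four] <;>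
    ring_nf <;> simp [Complex.I_sq]

theorem Umat_eq (p : EuclideanSpace ℝ (Fin 3)) :
    Umat p = aplus p • 1 + (aminus p / ‖p‖) • (diracBeta * alphaDot p) := by
  simp only [Umat, Complex.coe_smul]

theorem Umat_mul_diracSym {p : EuclideanSpace ℝ (Fin 3)} (hp : p ≠ 0) :
    Umat p * diracSym p = (lam p • diracBeta) * Umat p := by
  have hcoeff : aplus p = aminus p / ‖p‖ * (lam p + 1) := by
    rw [div_mul_eq_mul_div, aminus_mul_lam_add_one,
      mul_div_cancel_right₀ _ (norm_ne_zero_iff.mpr hp)]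
  rw [Umat_eq]
  exact smul_one_add_smul_mul_intertwines diracBeta_mul_self (alphaDot_mul_self p)
    (alphaDot_mul_diracBeta p) hcoeff (by linarith [lam_sq p])

theorem Umat_mul_eq_one {p : EuclideanSpace ℝ (Fin 3)} (hp : p ≠ 0) :
    Umat p * (aplus p • 1 - (aminus p / ‖p‖) • (diracBeta * alphaDot p)) = 1 := by
  have hcoeff : aplus p ^ 2 + (aminus p / ‖p‖) ^ 2 * ‖p‖ ^ 2 = 1 := by
    rw [div_pow, div_mul_cancel₀ _ (pow_ne_zero 2 (norm_ne_zero_iff.mpr hp)),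
      aplus_sq_add_aminus_sq]
  rw [Umat_eq, smul_one_add_smul_mul_smul_one_sub_smul
    (mul_mul_self_eq_neg_of_anticommute diracBeta_mul_self (alphaDot_mul_self p)
      (alphaDot_mul_diracBeta p)), hcoeff, one_smul]

/-- U(p)·(α·p + β)·U(p)⁻¹ = λ(p)·β : the Foldy–Wouthuysen unitary U(p) diagonalizes the
free Dirac symbol. -/
theorem Umat_diagonalizes (p : EuclideanSpace ℝ (Fin 3)) (hp : p ≠ 0) :
    Umat p * diracSym p * (Umat p)⁻¹ = (lam p : ℂ) • diracBeta := by
  have hdet : IsUnit (Umat p).det := Matrix.isUnit_det_of_right_inverse (Umat_mul_eq_one hp)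
  rw [Umat_mul_diracSym hp, mul_assoc, Matrix.mul_nonsing_inv _ hdet, mul_one, Complex.coe_smul]

end
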